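/- Let G ⊆ R⟨X⟩ be a set of polynomials and DM a function selecting divisor monomials (DM(g) ⊆ supp(g) for each g ∈ G). Let f ∈ R⟨X⟩ be a polynomial such that f →*_{G,DM} 0. Then, for every labelled quiver Q with labels in X such that DM is compatible with Q, the polynomial f is compatible with Q if and only if f is a Q-consequence of G. -/

import Mathlib

open scoped BigOperators

universe u₁ u₂ u₃ u₄ u₅

/-- A labelled quiver: a directed multigraph with edges labelled in `X`. -/
structure LQuiver (V : Type u₁) (E : Type u₂) (X : Type u₃) where
  src : E → V
  tgt : E → V
  lab : E → X

namespace LQuiver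

variable {V : Type u₁} {E : Type u₂} {X : Type u₃}

/-- Paths in the quiver (possibly empty). -/
inductive Walk (Q : LQuiver V E X) : V → V → Type (max u₁ u₂)
  | nil (v : V) : Walk Q v v
  | cons {u : V} (e : E) (p : Walk Q u (Q.src e)) : Walk Q u (Q.tgt e)

/-- The label of a path, a word in the free monoid `⟨X⟩`. -/
def wlabel (Q : LQuiver V E X) : ∀ {u v : V}, Q.Walk u v → FreeMonoid X
  | _, _, .nil _ => 1
  | _, _, .cons e p => FreeMonoid.of (Q.lab e) * Q.wlabel p

/-- The signature `σ(m)` of a monomial (word) `m`. -/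
def sigW (Q : LQuiver V E X) (m : FreeMonoid X) : Set (V × V) :=
  {p : V × V | ∃ w : Q.Walk p.1 p.2, Q.wlabel w = m}

variable {R : Type u₄} [CommRing R]

/-- The signature `σ(f)` of a noncommutative polynomial `f ∈ R⟨X⟩`. -/
def sig (Q : LQuiver V E X) (f : MonoidAlgebra R (FreeMonoid X)) : Set (V × V) :=
  ⋂ m ∈ f.coeff.support, Q.sigW m

/-- A polynomial is compatible with `Q` if its signature is nonempty. -/
def Compatible (Q : LQuiver V E X) (f : MonoidAlgebra R (FreeMonoid X)) : Prop :=
  (Q.sig f).Nonempty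

/-- The projection `s(f)` of `σ(f)` on sources. -/
def srcSet (Q : LQuiver V E X) (f : MonoidAlgebra R (FreeMonoid X)) : Set V :=
  Prod.fst '' Q.sig f

/-- The projection `t(f)` of `σ(f)` on targets. -/
def tgtSet (Q : LQuiver V E X) (f : MonoidAlgebra R (FreeMonoid X)) : Set V :=
  Prod.snd '' Q.sig f

/-- `f` is a `Q`-consequence of `F`. -/
def QConsequence (Q : LQuiver V E X) (F : Set (MonoidAlgebra R (FreeMonoid X)))
    (f : MonoidAlgebra R (FreeMonoid X)) : Prop :=
  Q.Compatible f ∧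
  ∃ (n : ℕ) (g a b : Fin n → MonoidAlgebra R (FreeMonoid X)),
    (∀ i, g i ∈ F) ∧
    f = ∑ i, a i * g i * b i ∧
    ∀ uv ∈ Q.sig f, ∀ i, ∃ ui vi : V,
      (uv.1, ui) ∈ Q.sig (b i) ∧ (ui, vi) ∈ Q.sig (g i) ∧ (vi, uv.2) ∈ Q.sig (a i)

end LQuiver

/-- The monomial `m` regarded as a polynomial in `R⟨X⟩`. -/
noncomputable def mono (R : Type u₄) [CommRing R] {X : Type u₃} (m : FreeMonoid X) :
    MonoidAlgebra R (FreeMonoid X) :=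
  MonoidAlgebra.single m 1

/-- One rewriting step with divisor monomials selected by `DM`. -/
def RewriteStep {R : Type u₄} [CommRing R] {X : Type u₃}
    (G : Set (MonoidAlgebra R (FreeMonoid X)))
    (DM : MonoidAlgebra R (FreeMonoid X) → Set (FreeMonoid X))
    (f h : MonoidAlgebra R (FreeMonoid X)) : Prop :=
  ∃ g ∈ G, ∃ m ∈ DM g, ∃ a b : FreeMonoid X, ∃ lam : R,
    a * m * b ∈ f.coeff.support ∧ h = f + lam • (mono R a * g * mono R b)

/-- A monomial order: a well-founded linear order compatible with multiplication. -/
def IsMonomialOrder {X : Type u₃} (ord : LinearOrder (FreeMonoid X)) : Prop :=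
  WellFounded ord.lt ∧
    ∀ a b m m' : FreeMonoid X, ord.le m m' → ord.le (a * m * b) (a * m' * b)

/-- The leading monomial of a polynomial w.r.t. a linear order on monomials
(defined as `1` for the zero polynomial). -/
noncomputable def LM {K : Type u₄} [CommRing K] {X : Type u₃}
    (ord : LinearOrder (FreeMonoid X)) (f : MonoidAlgebra K (FreeMonoid X)) : FreeMonoid X :=
  letI := ord
  letI : Decidable (f = 0) := Classical.dec _
  if h : f = 0 then 1 else f.coeff.support.max'
    (Finsupp.support_nonempty_iff.mpr (fun h0 => h (MonoidAlgebra.coeff_eq_zero.mp h0)))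

/-- One step of standard polynomial reduction w.r.t. a set `G` and a monomial order. -/
def ReduceStep {K : Type u₄} [Field K] {X : Type u₃} (ord : LinearOrder (FreeMonoid X))
    (G : Set (MonoidAlgebra K (FreeMonoid X)))
    (f h : MonoidAlgebra K (FreeMonoid X)) : Prop :=
  ∃ g ∈ G, g ≠ 0 ∧ ∃ a b : FreeMonoid X,
    a * LM ord g * b ∈ f.coeff.support ∧
    h = f - (f.coeff (a * LM ord g * b) / g.coeff (LM ord g)) • (mono K a * g * mono K b)

/-- `f` is `Q`-order compatible w.r.t. the order `ord`. -/
def QOrderCompatible {V : Type u₁} {E : Type u₂} {X : Type u₃} {K : Type u₄} [CommRing K]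
    (Q : LQuiver V E X) (ord : LinearOrder (FreeMonoid X))
    (f : MonoidAlgebra K (FreeMonoid X)) : Prop :=
  Q.Compatible f ∧ Q.sigW (LM ord f) = Q.sig f

/-- A representation of a labelled quiver. -/
structure QRep (R : Type u₄) [CommRing R] {V : Type u₁} {E : Type u₂} {X : Type u₃}
    (Q : LQuiver V E X) where
  M : V → Type u₅
  [addcg : ∀ v, AddCommGroup (M v)]
  [mod : ∀ v, Module R (M v)]
  φ : (e : E) → M (Q.src e) →ₗ[R] M (Q.tgt e)

attribute [instance] QRep.addcg QRep.mod

namespace QRep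

variable {R : Type u₄} [CommRing R] {V : Type u₁} {E : Type u₂} {X : Type u₃}
  {Q : LQuiver V E X}

/-- The linear map induced by a path. -/
def walkMap (ρ : QRep R Q) : ∀ {u v : V}, Q.Walk u v → (ρ.M u →ₗ[R] ρ.M v)
  | _, _, .nil _ => LinearMap.id
  | _, _, .cons e p => (ρ.φ e).comp (ρ.walkMap p)

/-- The representation is consistent with the labelling: two paths with the same
source, target and label induce the same linear map. -/
def Consistent (ρ : QRep R Q) : Prop :=
  ∀ (u v : V) (p q : Q.Walk u v), Q.wlabel p = Q.wlabel q → ρ.walkMap p = ρ.walkMap q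

/-- The realization `φ_{v,w}(f)` of a polynomial `f` (for a consistent representation and
`(v,w) ∈ σ(f)`, this is the well-defined linear map of the paper). -/
noncomputable def real (ρ : QRep R Q) (v w : V) (f : MonoidAlgebra R (FreeMonoid X)) :
    ρ.M v →ₗ[R] ρ.M w :=
  ∑ m ∈ f.coeff.support, f.coeff m •
    (letI : Decidable (∃ p : Q.Walk v w, Q.wlabel p = m) := Classical.dec _
     if h : ∃ p : Q.Walk v w, Q.wlabel p = m then ρ.walkMap h.choose else 0)

end QRep

/-!
Each step `fₖ → fₖ₊₁ = fₖ + cₖ aₖ gₖ bₖ` of a rewriting sequence from `f` to `0` uses a divisor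
monomial `mₖ` of `gₖ` with `aₖ mₖ bₖ ∈ supp fₖ`. A pair `(u, v) ∈ σ(fₖ)` is joined by a path labelled
`aₖ mₖ bₖ`, which splits into paths labelled `bₖ`, `mₖ`, `aₖ`; since `σ(mₖ) = σ(gₖ)`, the summand
`aₖ gₖ bₖ` factors through `(u, v)`. In particular `σ(fₖ) ⊆ σ(fₖ₊₁)`, so every summand of
`f = -∑ cₖ aₖ gₖ bₖ` factors through every pair of `σ(f)`.
-/

namespace LQuiver

variable {V : Type u₁} {E : Type u₂} {X : Type u₃} {Q : LQuiver V E X}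

/-- Concatenation of walks: `p.comp q` is `q` followed by `p`. -/
def Walk.comp : ∀ {w v : V}, Q.Walk w v → ∀ {u : V}, Q.Walk u w → Q.Walk u v
  | _, _, .nil _, _, q => q
  | _, _, .cons e p, _, q => .cons e (p.comp q)

@[simp]
theorem wlabel_nil (v : V) : Q.wlabel (.nil v) = 1 := by rw [wlabel]

@[simp]
theorem wlabel_cons {u : V} (e : E) (p : Q.Walk u (Q.src e)) :
    Q.wlabel (.cons e p) = FreeMonoid.of (Q.lab e) * Q.wlabel p := by rw [wlabel]

theorem wlabel_comp : ∀ {w v : V} (p : Q.Walk w v) {u : V} (q : Q.Walk u w),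
    Q.wlabel (p.comp q) = Q.wlabel p * Q.wlabel q
  | _, _, .nil _, _, _ => by rw [Walk.comp, wlabel_nil, one_mul]
  | _, _, .cons e p, _, q => by
    rw [Walk.comp, wlabel_cons, wlabel_cons, wlabel_comp p q, mul_assoc]

theorem exists_walk_split : ∀ {u v : V} (w : Q.Walk u v) {m₁ m₂ : FreeMonoid X},
    Q.wlabel w = m₁ * m₂ →
    ∃ (z : V) (p : Q.Walk u z) (q : Q.Walk z v), Q.wlabel p = m₂ ∧ Q.wlabel q = m₁
  | _, _, .nil v, m₁, m₂, h => by
      have h' := congrArg FreeMonoid.toList h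
      rw [wlabel_nil, FreeMonoid.toList_one, FreeMonoid.toList_mul, eq_comm,
        List.append_eq_nil_iff] at h'
      obtain ⟨rfl, rfl⟩ : m₁ = 1 ∧ m₂ = 1 :=
        ⟨FreeMonoid.toList.injective h'.1, FreeMonoid.toList.injective h'.2⟩
      exact ⟨v, .nil v, .nil v, wlabel_nil v, wlabel_nil v⟩
  | _, _, .cons e p, m₁, m₂, h => by
      induction m₁ using FreeMonoid.casesOn with
      | one => exact ⟨_, .cons e p, .nil _, by rw [h, one_mul], wlabel_nil _⟩
      | of_mul x t =>
        have h' := congrArg FreeMonoid.toList (h.trans (mul_assoc _ _ _))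
        simp only [wlabel_cons, FreeMonoid.toList_of_mul, List.cons.injEq] at h'
        obtain ⟨z, p', q', hp', hq'⟩ :=
          exists_walk_split p (m₁ := t) (m₂ := m₂) (FreeMonoid.toList.injective h'.2)
        exact ⟨z, p', .cons e q', hp', by rw [wlabel_cons, hq', h'.1]⟩

theorem mem_sigW_mul {x y : FreeMonoid X} {uv : V × V} :
    uv ∈ Q.sigW (x * y) ↔ ∃ w, (uv.1, w) ∈ Q.sigW y ∧ (w, uv.2) ∈ Q.sigW x := by
  constructor
  · rintro ⟨w, hw⟩
    obtain ⟨z, p, q, hp, hq⟩ := exists_walk_split w hw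
    exact ⟨z, ⟨p, hp⟩, ⟨q, hq⟩⟩
  · rintro ⟨z, ⟨p, rfl⟩, ⟨q, rfl⟩⟩
    exact ⟨q.comp p, wlabel_comp q p⟩

variable {R : Type u₄} [CommRing R]

theorem mem_sig {f : MonoidAlgebra R (FreeMonoid X)} {uv : V × V} :
    uv ∈ Q.sig f ↔ ∀ m ∈ f.coeff.support, uv ∈ Q.sigW m :=
  Set.mem_iInter₂

theorem sigW_subset_sig_single (m : FreeMonoid X) (c : R) :
    Q.sigW m ⊆ Q.sig (MonoidAlgebra.single m c) := fun _ huv =>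
  mem_sig.2 fun _ hm' => Finset.mem_singleton.1 (Finsupp.support_single_subset hm') ▸ huv

theorem sig_inter_subset_sig_add (f g : MonoidAlgebra R (FreeMonoid X)) :
    Q.sig f ∩ Q.sig g ⊆ Q.sig (f + g) := fun _ ⟨hf, hg⟩ => by
  classical
  exact mem_sig.2 fun m hm => (Finset.mem_union.1 (Finsupp.support_add hm)).elim
    (mem_sig.1 hf m) (mem_sig.1 hg m)

theorem sig_subset_sig_smul (c : R) (f : MonoidAlgebra R (FreeMonoid X)) :
    Q.sig f ⊆ Q.sig (c • f) := fun _ hf =>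
  mem_sig.2 fun m hm => mem_sig.1 hf m (Finsupp.support_smul hm)

theorem mem_sig_mul {f g : MonoidAlgebra R (FreeMonoid X)} {u w v : V}
    (hg : (u, w) ∈ Q.sig g) (hf : (w, v) ∈ Q.sig f) : (u, v) ∈ Q.sig (f * g) := by
  classical
  refine mem_sig.2 fun m hm => ?_
  obtain ⟨x, hx, y, hy, rfl⟩ := Finset.mem_mul.1 (MonoidAlgebra.support_coeff_mul_subset f g hm)
  exact mem_sigW_mul.2 ⟨w, mem_sig.1 hg y hy, mem_sig.1 hf x hx⟩

/-- The condition that a `Q`-consequence imposes on a summand `a * g * b` at the pairs of `S`. -/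
def FactorsOn (Q : LQuiver V E X) (S : Set (V × V)) (a g b : MonoidAlgebra R (FreeMonoid X)) :
    Prop :=
  ∀ uv ∈ S, ∃ ui vi : V,
    (uv.1, ui) ∈ Q.sig b ∧ (ui, vi) ∈ Q.sig g ∧ (vi, uv.2) ∈ Q.sig a

theorem FactorsOn.mono {S T : Set (V × V)} {a g b : MonoidAlgebra R (FreeMonoid X)}
    (h : Q.FactorsOn S a g b) (hTS : T ⊆ S) : Q.FactorsOn T a g b :=
  fun uv huv => h uv (hTS huv)

theorem FactorsOn.smul_left {S : Set (V × V)} {a g b : MonoidAlgebra R (FreeMonoid X)}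
    (h : Q.FactorsOn S a g b) (c : R) : Q.FactorsOn S (c • a) g b := fun uv huv => by
  obtain ⟨ui, vi, hb, hg, ha⟩ := h uv huv
  exact ⟨ui, vi, hb, hg, sig_subset_sig_smul c a ha⟩

theorem FactorsOn.subset_sig_mul {S : Set (V × V)} {a g b : MonoidAlgebra R (FreeMonoid X)}
    (h : Q.FactorsOn S a g b) : S ⊆ Q.sig (a * g * b) := fun uv huv => by
  obtain ⟨ui, vi, hb, hg, ha⟩ := h uv huv
  exact mem_sig_mul hb (mem_sig_mul hg ha)

theorem factorsOn_sigW_mul_mul {g : MonoidAlgebra R (FreeMonoid X)} {m : FreeMonoid X}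
    (hm : Q.sigW m = Q.sig g) (a b : FreeMonoid X) :
    Q.FactorsOn (Q.sigW (a * m * b)) (mono R a) g (mono R b) := fun _ huv => by
  obtain ⟨ui, hb, hamb⟩ := mem_sigW_mul.1 huv
  obtain ⟨vi, hm', ha⟩ := mem_sigW_mul.1 hamb
  exact ⟨ui, vi, sigW_subset_sig_single b 1 hb, hm ▸ hm', sigW_subset_sig_single a 1 ha⟩

def IsCombinationOn (Q : LQuiver V E X) (F : Set (MonoidAlgebra R (FreeMonoid X)))
    (S : Set (V × V)) (f : MonoidAlgebra R (FreeMonoid X)) : Prop :=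
  ∃ (n : ℕ) (g a b : Fin n → MonoidAlgebra R (FreeMonoid X)),
    (∀ i, g i ∈ F) ∧ f = ∑ i, a i * g i * b i ∧ ∀ i, Q.FactorsOn S (a i) (g i) (b i)

theorem qConsequence_iff {F : Set (MonoidAlgebra R (FreeMonoid X))}
    {f : MonoidAlgebra R (FreeMonoid X)} :
    Q.QConsequence F f ↔ Q.Compatible f ∧ Q.IsCombinationOn F (Q.sig f) f := by
  constructor
  · rintro ⟨hc, n, g, a, b, hgF, hsum, hfac⟩
    exact ⟨hc, n, g, a, b, hgF, hsum, fun i uv huv => hfac uv huv i⟩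
  · rintro ⟨hc, n, g, a, b, hgF, hsum, hfac⟩
    exact ⟨hc, n, g, a, b, hgF, hsum, fun uv huv i => hfac i uv huv⟩

variable {F : Set (MonoidAlgebra R (FreeMonoid X))} {S T : Set (V × V)}

theorem isCombinationOn_zero : Q.IsCombinationOn F S 0 :=
  ⟨0, finZeroElim, finZeroElim, finZeroElim, finZeroElim, by simp, finZeroElim⟩

theorem IsCombinationOn.mono {f : MonoidAlgebra R (FreeMonoid X)}
    (h : Q.IsCombinationOn F S f) (hTS : T ⊆ S) : Q.IsCombinationOn F T f := by
  obtain ⟨n, g, a, b, hgF, rfl, hfac⟩ := h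
  exact ⟨n, g, a, b, hgF, rfl, fun i => (hfac i).mono hTS⟩

theorem IsCombinationOn.add_term {f a g b : MonoidAlgebra R (FreeMonoid X)}
    (h : Q.IsCombinationOn F S f) (hg : g ∈ F) (hfac : Q.FactorsOn S a g b) :
    Q.IsCombinationOn F S (a * g * b + f) := by
  obtain ⟨n, gs, as, bs, hgF, rfl, hfacs⟩ := h
  refine ⟨n + 1, Fin.cons g gs, Fin.cons a as, Fin.cons b bs, Fin.cases hg hgF, ?_,
    Fin.cases hfac hfacs⟩
  simp [Fin.sum_univ_succ]

variable {DM : MonoidAlgebra R (FreeMonoid X) → Set (FreeMonoid X)}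

theorem isCombinationOn_sig_of_rewriteStep {f h : MonoidAlgebra R (FreeMonoid X)}
    (hQ : ∀ g ∈ F, ∀ m ∈ DM g, Q.sigW m = Q.sig g) (hstep : RewriteStep F DM f h)
    (hh : Q.IsCombinationOn F (Q.sig h) h) : Q.IsCombinationOn F (Q.sig f) f := by
  obtain ⟨g, hg, m, hm, a, b, c, hsupp, rfl⟩ := hstep
  have hfac : Q.FactorsOn (Q.sig f) (mono R a) g (mono R b) :=
    (factorsOn_sigW_mul_mul (hQ g hg m hm) a b).mono fun uv huv => mem_sig.1 huv _ hsupp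
  have hsig : Q.sig f ⊆ Q.sig (f + c • (mono R a * g * mono R b)) := fun uv huv =>
    sig_inter_subset_sig_add _ _ ⟨huv, sig_subset_sig_smul _ _ (hfac.subset_sig_mul huv)⟩
  have hf : f = -c • mono R a * g * mono R b + (f + c • (mono R a * g * mono R b)) := by
    rw [smul_mul_assoc, smul_mul_assoc, neg_smul]
    abel
  have key := (hh.mono hsig).add_term hg (hfac.smul_left (-c))
  rwa [← hf] at key

theorem isCombinationOn_sig_of_reflTransGen {f : MonoidAlgebra R (FreeMonoid X)}
    (hQ : ∀ g ∈ F, ∀ m ∈ DM g, Q.sigW m = Q.sig g)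
    (hred : Relation.ReflTransGen (RewriteStep F DM) f 0) :
    Q.IsCombinationOn F (Q.sig f) f := by
  induction hred using Relation.ReflTransGen.head_induction_on with
  | refl => exact isCombinationOn_zero
  | head hstep _ ih => exact isCombinationOn_sig_of_rewriteStep hQ hstep ih

end LQuiver

theorem rewriting_consequences_general {X R : Type*} [CommRing R]
    (G : Set (MonoidAlgebra R (FreeMonoid X)))
    (DM : MonoidAlgebra R (FreeMonoid X) → Set (FreeMonoid X))
    (f : MonoidAlgebra R (FreeMonoid X))
    (hred : Relation.ReflTransGen (RewriteStep G DM) f 0) :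
    ∀ {V E : Type*} (Q : LQuiver V E X),
      (∀ g ∈ G, ∀ m ∈ DM g, Q.sigW m = Q.sig g) →
      (Q.Compatible f ↔ Q.QConsequence G f) :=
  fun Q hQ => ⟨fun hf => Q.qConsequence_iff.2 ⟨hf, Q.isCombinationOn_sig_of_reflTransGen hQ hred⟩,
    fun h => h.1⟩

/-- if `f →*_{G,DM} 0` and `DM` is compatible with `Q`, then
`f` is compatible with `Q` iff `f` is a `Q`-consequence of `G`. -/
theorem rewriting_consequences {X R : Type*} [CommRing R]
    (G : Set (MonoidAlgebra R (FreeMonoid X)))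
    (DM : MonoidAlgebra R (FreeMonoid X) → Set (FreeMonoid X))
    (hDM : ∀ g ∈ G, DM g ⊆ (g.coeff.support : Set (FreeMonoid X)))
    (f : MonoidAlgebra R (FreeMonoid X))
    (hred : Relation.ReflTransGen (RewriteStep G DM) f 0) :
    ∀ {V E : Type*} (Q : LQuiver V E X),
      (∀ g ∈ G, ∀ m ∈ DM g, Q.sigW m = Q.sig g) →
      (Q.Compatible f ↔ Q.QConsequence G f) :=
  rewriting_consequences_general G DM f hred
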